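/- arXiv:1211.6154 — 2 statements merged into one kernel-verified Lean document; each statement's English description precedes it below -/
import Mathlib

section
/- For a > −1/2 the integral over the unit ball in ℝ³ of |ξ|^{2a+2} / |h_v(ξ)|² is finite when |v| = 1, where h_v(ξ) = |ξ|(⟨ξ⟩ − v·ξ̂). Equivalently, in spherical coordinates with φ the angle from v, the integral ∫₀^π ∫₀^1 ρ^{2a+2} φ / (ρ² + φ²)² dρ dφ is finite for a > −1/2. -/
/-!
For `ρ = |ξ| ≤ 1` and `t = v · ξ` one has `ρ (⟨ρ⟩ - t / ρ) ≥ (ρ⁴ + |ξ⊥|²) / (3ρ)`, where `ξ⊥` is the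
component of `ξ` orthogonal to `v`. The interpolation `(x + y)² ≥ x^θ y^(2-θ)` then bounds the
integrand by `9 ρ⁻¹ |ξ⊥|^(2δ-2)` for a small `δ > 0`, and in an orthonormal frame `(v, e₁, e₂)` this
is at most `9 |t|^(δ-1) |ξ₁|^(δ/2-1) |ξ₂|^(δ/2-1)`, a product of integrable one-dimensional powers.
The same interpolation dominates the model integrand by `φ^(2θ-3) ρ^(2a+2-2θ)`, which is integrable
as soon as `1 < θ < a + 3/2`.
-/

open scoped RealInnerProductSpace
open MeasureTheory

section

open Real Set Module

theorem rpow_mul_rpow_le_rpow_add {x y z s t : ℝ} (hx : 0 ≤ x) (hy : 0 ≤ y) (hxz : x ≤ z)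
    (hyz : y ≤ z) (hs : 0 ≤ s) (ht : 0 ≤ t) (hz : 0 < z) : x ^ s * y ^ t ≤ z ^ (s + t) := by
  rw [rpow_add hz]
  exact mul_le_mul (rpow_le_rpow hx hxz hs) (rpow_le_rpow hy hyz ht) (by positivity)
    (by positivity)

theorem inv_add_sq_le_rpow_mul_rpow {x y θ : ℝ} (hx : 0 < x) (hy : 0 < y) (hθ₀ : 0 ≤ θ)
    (hθ₂ : θ ≤ 2) : ((x + y) ^ 2)⁻¹ ≤ x ^ (-θ) * y ^ (θ - 2) := by
  have key : x ^ θ * y ^ (2 - θ) ≤ (x + y) ^ 2 := by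
    have := rpow_mul_rpow_le_rpow_add hx.le hy.le (le_add_of_nonneg_right hy.le)
      (le_add_of_nonneg_left hx.le) hθ₀ (sub_nonneg.2 hθ₂) (by positivity)
    rwa [add_sub_cancel, rpow_two] at this
  rw [rpow_neg hx.le, ← neg_sub, rpow_neg hy.le, ← mul_inv]
  exact inv_anti₀ (by positivity) key

theorem rpow_mul_div_sq_add_sq_sq_le {a θ ρ φ : ℝ} (hθ₀ : 0 ≤ θ) (hθ₂ : θ ≤ 2) (hρ : 0 < ρ)
    (hφ : 0 < φ) :
    ρ ^ (2 * a + 2) * φ / (ρ ^ 2 + φ ^ 2) ^ 2 ≤ φ ^ (2 * θ - 3) * ρ ^ (2 * a + 2 - 2 * θ) := by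
  have hρ2 : (ρ ^ 2) ^ (-θ) = ρ ^ (-2 * θ) := by
    rw [← rpow_natCast_mul hρ.le]; push_cast; ring_nf
  have hφ2 : (φ ^ 2) ^ (θ - 2) = φ ^ (2 * θ - 4) := by
    rw [← rpow_natCast_mul hφ.le]; push_cast; ring_nf
  calc ρ ^ (2 * a + 2) * φ / (ρ ^ 2 + φ ^ 2) ^ 2
      = ρ ^ (2 * a + 2) * φ * ((ρ ^ 2 + φ ^ 2) ^ 2)⁻¹ := div_eq_mul_inv _ _
    _ ≤ ρ ^ (2 * a + 2) * φ * ((ρ ^ 2) ^ (-θ) * (φ ^ 2) ^ (θ - 2)) := by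
        gcongr
        exact inv_add_sq_le_rpow_mul_rpow (by positivity) (by positivity) hθ₀ hθ₂
    _ = (φ ^ (1 : ℝ) * φ ^ (2 * θ - 4)) * (ρ ^ (2 * a + 2) * ρ ^ (-2 * θ)) := by
        rw [hρ2, hφ2, rpow_one]; ring
    _ = φ ^ (2 * θ - 3) * ρ ^ (2 * a + 2 - 2 * θ) := by
        rw [← rpow_add hφ, ← rpow_add hρ]; ring_nf

theorem integrableOn_Ioc_prod_Ioc_rpow_mul_rpow {s t : ℝ} (hs : -1 < s) (ht : -1 < t)
    (A B : ℝ) :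
    IntegrableOn (fun p : ℝ × ℝ => p.1 ^ s * p.2 ^ t) (Ioc 0 A ×ˢ Ioc 0 B) := by
  have := (intervalIntegral.intervalIntegrable_rpow' hs (a := 0) (b := A)).1.mul_prod
    (intervalIntegral.intervalIntegrable_rpow' ht (a := 0) (b := B)).1
  rwa [Measure.prod_restrict, ← Measure.volume_eq_prod] at this

theorem integrableOn_rpow_mul_div_sq_add_sq_sq {a : ℝ} (ha : -(1 / 2) < a) (A B : ℝ) :
    IntegrableOn (fun p : ℝ × ℝ => p.2 ^ (2 * a + 2) * p.1 / (p.2 ^ 2 + p.1 ^ 2) ^ 2)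
      (Ioc 0 A ×ˢ Ioc 0 B) := by
  obtain ⟨θ, hθ₁, hθ⟩ : ∃ θ, 1 < θ ∧ θ < min 2 (a + 3 / 2) :=
    exists_between (lt_min one_lt_two (by linarith))
  have hθ₂ := (lt_min_iff.1 hθ).1
  have hθa := (lt_min_iff.1 hθ).2
  refine (integrableOn_Ioc_prod_Ioc_rpow_mul_rpow (s := 2 * θ - 3) (t := 2 * a + 2 - 2 * θ)
    (by linarith) (by linarith) A B).mono' (by fun_prop : Measurable _).aestronglyMeasurable ?_
  filter_upwards [ae_restrict_mem (measurableSet_Ioc.prod measurableSet_Ioc)]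
    with p ⟨⟨hφ, _⟩, hρ, _⟩
  rw [norm_of_nonneg (by positivity)]
  exact rpow_mul_div_sq_add_sq_sq_le (by linarith) hθ₂.le hρ hφ

theorem intervalIntegrable_abs_rpow {c : ℝ} (hc : -1 < c) (a b : ℝ) :
    IntervalIntegrable (fun x : ℝ => |x| ^ c) volume a b := by
  have pos : ∀ b, 0 ≤ b → IntervalIntegrable (fun x : ℝ => |x| ^ c) volume 0 b := fun b hb =>
    (intervalIntegral.intervalIntegrable_rpow' hc).congr fun x hx => by
      rw [uIoc_of_le hb] at hx
      simp [abs_of_pos hx.1]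
  have from_zero : ∀ b, IntervalIntegrable (fun x : ℝ => |x| ^ c) volume 0 b := by
    intro b
    rcases le_total 0 b with hb | hb
    · exact pos b hb
    · simpa using (IntervalIntegrable.iff_comp_neg).mp (pos (-b) (neg_nonneg.2 hb))
  exact (from_zero a).symm.trans (from_zero b)

theorem integrableOn_ball_prod_abs_inner_rpow {ι E : Type*} [Fintype ι] [NormedAddCommGroup E]
    [InnerProductSpace ℝ E] [FiniteDimensional ℝ E] [MeasurableSpace E] [BorelSpace E]
    (b : OrthonormalBasis ι ℝ E) {c : ι → ℝ} (hc : ∀ i, -1 < c i) (r : ℝ) :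
    IntegrableOn (fun ξ => ∏ i, |⟪b i, ξ⟫| ^ c i) (Metric.ball 0 r) := by
  let e : E ≃ᵐ (ι → ℝ) := b.measurableEquiv.trans (MeasurableEquiv.toLp 2 (ι → ℝ)).symm
  have he : MeasurePreserving e :=
    b.measurePreserving_measurableEquiv.trans
      (EuclideanSpace.volume_preserving_symm_measurableEquiv_toLp ι)
  have he_apply (ξ : E) (i : ι) : e ξ i = ⟪b i, ξ⟫ := by
    simp [e, OrthonormalBasis.measurableEquiv, b.repr_apply_apply]
  have cube : IntegrableOn (fun w : ι → ℝ => ∏ i, |w i| ^ c i) (univ.pi fun _ => uIcc (-r) r) := by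
    rw [IntegrableOn, volume_pi, Measure.restrict_pi_pi]
    exact Integrable.fintype_prod fun i =>
      (intervalIntegrable_iff').1 (intervalIntegrable_abs_rpow (hc i) (-r) r)
  have pullback := (he.integrableOn_comp_preimage e.measurableEmbedding).2 cube
  simp only [Function.comp_def, he_apply] at pullback
  refine pullback.mono_set fun ξ hξ i _ => ?_
  have hcoord : |⟪b i, ξ⟫| ≤ r := by
    refine (abs_real_inner_le_norm _ _).trans ?_
    rw [b.orthonormal.norm_eq_one, one_mul]
    exact (mem_ball_zero_iff.1 hξ).le
  rw [he_apply, uIcc_of_le (by linarith [abs_nonneg ⟪b i, ξ⟫])]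
  exact abs_le.1 hcoord

theorem ae_inner_ne_zero {E : Type*} [NormedAddCommGroup E] [InnerProductSpace ℝ E]
    [FiniteDimensional ℝ E] [MeasurableSpace E] [BorelSpace E] (μ : Measure E)
    [μ.IsAddHaarMeasure] {w : E} (hw : w ≠ 0) : ∀ᵐ ξ ∂μ, ⟪w, ξ⟫ ≠ 0 := by
  have hker : LinearMap.ker (innerₛₗ ℝ w) ≠ ⊤ := fun h =>
    hw (inner_self_eq_zero.1 (LinearMap.mem_ker.1 (h ▸ Submodule.mem_top)))
  rw [ae_iff]
  convert Measure.addHaar_submodule μ _ hker using 2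
  ext ξ
  simp

theorem exists_orthonormalBasis_apply_zero_eq {𝕜 E : Type*} [RCLike 𝕜] [NormedAddCommGroup E]
    [InnerProductSpace 𝕜 E] {n : ℕ} (hE : finrank 𝕜 E = n + 1) {v : E} (hv : ‖v‖ = 1) :
    ∃ b : OrthonormalBasis (Fin (n + 1)) 𝕜 E, b 0 = v := by
  have : FiniteDimensional 𝕜 E := Module.finite_of_finrank_eq_succ hE
  obtain ⟨b, hb⟩ := Orthonormal.exists_orthonormalBasis_extension_of_card_eq
    (v := fun _ : Fin (n + 1) => v) (s := {0}) (by simpa using hE) (by simp [hv])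
  exact ⟨b, hb 0 rfl⟩

/-- The symbol `h_v`. -/
noncomputable def sonicSymbol {E : Type*} [NormedAddCommGroup E] [InnerProductSpace ℝ E]
    (v ξ : E) : ℝ :=
  ‖ξ‖ * (√(1 + ‖ξ‖ ^ 2) - ⟪v, ‖ξ‖⁻¹ • ξ⟫)

theorem div_le_mul_sqrt_one_add_sq_sub {ρ t : ℝ} (hρ₀ : 0 < ρ) (hρ₁ : ρ ≤ 1)
    (ht : t ^ 2 ≤ ρ ^ 2) :
    (ρ ^ 4 + (ρ ^ 2 - t ^ 2)) / (3 * ρ) ≤ ρ * (√(1 + ρ ^ 2) - ρ⁻¹ * t) := by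
  have hsqrt : 1 + ρ ^ 2 / 3 ≤ √(1 + ρ ^ 2) := by
    rw [le_sqrt' (by positivity)]
    nlinarith [pow_le_one₀ hρ₀.le hρ₁ (n := 2), sq_nonneg ρ]
  have htρ : t ≤ ρ := (abs_le_of_sq_le_sq' ht hρ₀.le).2
  rw [mul_sub, ← mul_assoc, mul_inv_cancel₀ hρ₀.ne', one_mul, div_le_iff₀ (by positivity)]
  nlinarith [mul_le_mul_of_nonneg_left hsqrt hρ₀.le, sq_nonneg (ρ - t)]

theorem rpow_div_mul_sqrt_one_add_sq_sub_sq_le {a δ ρ t : ℝ} (hδ₀ : 0 < δ) (hδ₁ : δ ≤ 1)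
    (hδa : 4 * δ ≤ 2 * a + 1) (hρ₀ : 0 < ρ) (hρ₁ : ρ ≤ 1) (ht : t ^ 2 < ρ ^ 2) :
    ρ ^ (2 * a + 2) / (ρ * (√(1 + ρ ^ 2) - ρ⁻¹ * t)) ^ 2 ≤
      9 * (ρ⁻¹ * (ρ ^ 2 - t ^ 2) ^ (δ - 1)) := by
  set q := ρ ^ 2 - t ^ 2
  have hq : 0 < q := sub_pos.2 ht
  have hD := div_le_mul_sqrt_one_add_sq_sub hρ₀ hρ₁ ht.le
  have hρ4 : (ρ ^ 4) ^ (-(1 + δ)) = ρ ^ (-4 * (1 + δ)) := by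
    rw [← rpow_natCast_mul hρ₀.le]; push_cast; ring_nf
  calc ρ ^ (2 * a + 2) / (ρ * (√(1 + ρ ^ 2) - ρ⁻¹ * t)) ^ 2
      ≤ ρ ^ (2 * a + 2) / ((ρ ^ 4 + q) / (3 * ρ)) ^ 2 := by
        gcongr
    _ = 9 * (ρ ^ (2 * a + 2) * ρ ^ (2 : ℝ) * ((ρ ^ 4 + q) ^ 2)⁻¹) := by
        rw [rpow_two]; field_simp; ring
    _ ≤ 9 * (ρ ^ (2 * a + 2) * ρ ^ (2 : ℝ) * ((ρ ^ 4) ^ (-(1 + δ)) * q ^ (δ - 1))) := by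
        have := inv_add_sq_le_rpow_mul_rpow (pow_pos hρ₀ 4) hq (θ := 1 + δ) (by linarith)
          (by linarith)
        rw [show 1 + δ - 2 = δ - 1 by ring] at this
        gcongr
    _ = 9 * (ρ ^ (2 * a - 4 * δ) * q ^ (δ - 1)) := by
        have hexp :
            ρ ^ (2 * a + 2) * ρ ^ (2 : ℝ) * ρ ^ (-4 * (1 + δ)) = ρ ^ (2 * a - 4 * δ) := by
          rw [← rpow_add hρ₀, ← rpow_add hρ₀]; ring_nf
        rw [hρ4, ← mul_assoc (ρ ^ (2 * a + 2) * _), hexp]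
    _ ≤ 9 * (ρ⁻¹ * q ^ (δ - 1)) := by
        rw [← rpow_neg_one]
        have := rpow_le_rpow_of_exponent_ge hρ₀ hρ₁ (show -1 ≤ 2 * a - 4 * δ by linarith)
        gcongr

theorem inv_mul_rpow_le_abs_rpow_mul {δ ρ t₀ t₁ t₂ : ℝ} (hδ₀ : 0 < δ) (hδ₁ : δ ≤ 1)
    (hρ₀ : 0 < ρ) (hρ : ρ ^ 2 = t₀ ^ 2 + t₁ ^ 2 + t₂ ^ 2) (h₀ : t₀ ≠ 0) (h₁ : t₁ ≠ 0)
    (h₂ : t₂ ≠ 0) :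
    ρ⁻¹ * (t₁ ^ 2 + t₂ ^ 2) ^ (δ - 1) ≤
      |t₀| ^ (δ - 1) * |t₁| ^ (δ / 2 - 1) * |t₂| ^ (δ / 2 - 1) := by
  set q := t₁ ^ 2 + t₂ ^ 2
  have hq : 0 < q := by positivity
  have ht₀ : |t₀| ≤ ρ := abs_le_of_sq_le_sq (by nlinarith) hρ₀.le
  have hqρ : √q ≤ ρ := (sqrt_le_sqrt (by nlinarith)).trans_eq (sqrt_sq hρ₀.le)
  have hgm : |t₀| ^ (1 - δ) * q ^ (δ / 2) ≤ ρ := by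
    have := rpow_mul_rpow_le_rpow_add (abs_nonneg t₀) (sqrt_nonneg q) ht₀ hqρ
      (sub_nonneg.2 hδ₁) hδ₀.le hρ₀
    rwa [sub_add_cancel, rpow_one, sqrt_eq_rpow, ← rpow_mul hq.le, one_div_mul_eq_div] at this
  have hprod : |t₁| * |t₂| ≤ q := by
    nlinarith [sq_abs t₁, sq_abs t₂, sq_nonneg (|t₁| - |t₂|)]
  calc ρ⁻¹ * q ^ (δ - 1)
      ≤ (|t₀| ^ (1 - δ) * q ^ (δ / 2))⁻¹ * q ^ (δ - 1) := by
        gcongr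
    _ = |t₀| ^ (δ - 1) * q ^ (δ / 2 - 1) := by
        rw [mul_inv, ← rpow_neg (abs_nonneg _), ← rpow_neg hq.le, mul_assoc, ← rpow_add hq]
        ring_nf
    _ ≤ |t₀| ^ (δ - 1) * (|t₁| * |t₂|) ^ (δ / 2 - 1) := by
        have := rpow_le_rpow_of_nonpos (by positivity) hprod (show δ / 2 - 1 ≤ 0 by linarith)
        gcongr
    _ = |t₀| ^ (δ - 1) * |t₁| ^ (δ / 2 - 1) * |t₂| ^ (δ / 2 - 1) := by
        rw [mul_rpow (abs_nonneg _) (abs_nonneg _), mul_assoc]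

theorem integrableOn_ball_norm_rpow_div_sonicSymbol_sq {E : Type*} [NormedAddCommGroup E]
    [InnerProductSpace ℝ E] [FiniteDimensional ℝ E] [MeasurableSpace E] [BorelSpace E]
    (hE : finrank ℝ E = 3) {v : E} (hv : ‖v‖ = 1) {a : ℝ} (ha : -(1 / 2) < a) :
    IntegrableOn (fun ξ => ‖ξ‖ ^ (2 * a + 2) / sonicSymbol v ξ ^ 2) (Metric.ball 0 1) := by
  obtain ⟨b, rfl⟩ := exists_orthonormalBasis_apply_zero_eq (n := 2) hE hv
  set δ := min 1 ((2 * a + 1) / 4)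
  have hδ₀ : 0 < δ := lt_min one_pos (by linarith)
  have hδ₁ : δ ≤ 1 := min_le_left _ _
  have hδa : 4 * δ ≤ 2 * a + 1 := by linarith [min_le_right 1 ((2 * a + 1) / 4)]
  have majorant := (integrableOn_ball_prod_abs_inner_rpow b
    (c := ![δ - 1, δ / 2 - 1, δ / 2 - 1]) (fun i => by fin_cases i <;> simp <;> linarith)
    1).const_mul 9
  refine majorant.mono' (by unfold sonicSymbol; fun_prop : Measurable _).aestronglyMeasurable ?_
  have hb (i) := ae_restrict_of_ae (s := Metric.ball 0 1)
    (ae_inner_ne_zero volume (b.orthonormal.ne_zero i))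
  filter_upwards [ae_restrict_mem measurableSet_ball, hb 0, hb 1, hb 2] with ξ hξ h₀ h₁ h₂
  have hρ₀ : 0 < ‖ξ‖ := norm_pos_iff.2 fun h => h₀ (by simp [h])
  have hρ₁ : ‖ξ‖ < 1 := mem_ball_zero_iff.1 hξ
  have hsum : ‖ξ‖ ^ 2 = ⟪b 0, ξ⟫ ^ 2 + ⟪b 1, ξ⟫ ^ 2 + ⟪b 2, ξ⟫ ^ 2 := by
    rw [← b.sum_sq_inner_right, Fin.sum_univ_three]
  rw [norm_of_nonneg (by positivity), sonicSymbol, real_inner_smul_right, Fin.prod_univ_three]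
  calc ‖ξ‖ ^ (2 * a + 2) / (‖ξ‖ * (√(1 + ‖ξ‖ ^ 2) - ‖ξ‖⁻¹ * ⟪b 0, ξ⟫)) ^ 2
      ≤ 9 * (‖ξ‖⁻¹ * (‖ξ‖ ^ 2 - ⟪b 0, ξ⟫ ^ 2) ^ (δ - 1)) :=
        rpow_div_mul_sqrt_one_add_sq_sub_sq_le hδ₀ hδ₁ hδa hρ₀ hρ₁.le
          (by rw [hsum, add_assoc]; exact lt_add_of_pos_right _ (by positivity))
    _ = 9 * (‖ξ‖⁻¹ * (⟪b 1, ξ⟫ ^ 2 + ⟪b 2, ξ⟫ ^ 2) ^ (δ - 1)) := by rw [hsum]; ring_nf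
    _ ≤ _ := by
        simp only [Matrix.cons_val_zero, Matrix.cons_val_one, Matrix.cons_val_two]
        exact mul_le_mul_of_nonneg_left
          (inv_mul_rpow_le_abs_rpow_mul hδ₀ hδ₁ hρ₀ hsum h₀ h₁ h₂) (by norm_num)

end

theorem sonic_low_frequency_integral_finite (v : EuclideanSpace ℝ (Fin 3)) (hv : ‖v‖ = 1)
    (a : ℝ) (ha : -(1/2) < a) :
    IntegrableOn
      (fun ξ : EuclideanSpace ℝ (Fin 3) =>
        ‖ξ‖ ^ (2 * a + 2) /
          (‖ξ‖ * (Real.sqrt (1 + ‖ξ‖ ^ 2) - ⟪v, ‖ξ‖⁻¹ • ξ⟫)) ^ 2)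
      (Metric.ball (0 : EuclideanSpace ℝ (Fin 3)) 1) volume ∧
    IntegrableOn
      (fun p : ℝ × ℝ => p.2 ^ (2 * a + 2) * p.1 / (p.2 ^ 2 + p.1 ^ 2) ^ 2)
      (Set.Ioc (0 : ℝ) Real.pi ×ˢ Set.Ioc (0 : ℝ) 1) volume :=
  ⟨integrableOn_ball_norm_rpow_div_sonicSymbol_sq finrank_euclideanSpace_fin hv ha,
    integrableOn_rpow_mul_div_sq_add_sq_sq ha Real.pi 1⟩
end

section
/- Let M : [0,∞) → ℂ satisfy |M(t)| ≲ (1+t)^{−6}, extended by 0 to t < 0, and suppose its Fourier transform satisfies |1 + M̂(ω)| ≥ c > 0 for all ω ∈ ℝ and |∂_ω^l M̂(ω)| ≲ (1+|ω|)^{−2} for 0 ≤ l ≤ 4. Then K := F^{-1}[(1+M̂)^{-1} − 1] satisfies |K(t)| ≲ (1+|t|)^{−4}. -/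
/-!
Write `F = 𝓕 M` and `g = (1 + F)⁻¹ - 1`, so that `(1 + F) g = -F`. The decay of `M` gives four
moments, hence `F ∈ C⁴`. Leibniz's rule applied to `(1 + F) g = -F` expresses `(1 + F) g⁽ᵏ⁾`
through `F⁽ᵏ⁾` and lower derivatives of `g`; dividing by `|1 + F| ≥ c` shows inductively that
every `g⁽ᵏ⁾`, `k ≤ 4`, is `O((1 + |ω|)⁻²)`, hence integrable. Finally
`(2πit)⁴ 𝓕 g(t) = 𝓕 g⁽⁴⁾(t)`, so `|t|⁴ |𝓕 g(t)| ≤ ‖g⁽⁴⁾‖₁`, together with `|𝓕 g| ≤ ‖g‖₁`.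
-/

open scoped FourierTransform

open MeasureTheory Real

section Integrability

variable {E : Type*} [NormedAddCommGroup E]

lemma integrable_of_norm_le_mul_inv_one_add_abs_sq {f : ℝ → E} (hf : AEStronglyMeasurable f)
    {A : ℝ} (hA : ∀ x, ‖f x‖ ≤ A * ((1 + |x|) ^ 2)⁻¹) : Integrable f := by
  have hbound : Integrable fun x : ℝ => A * (1 + ‖x‖) ^ (-2 : ℝ) :=
    (integrable_one_add_norm (by norm_num)).const_mul A
  refine hbound.mono' hf (ae_of_all _ fun x => (hA x).trans_eq ?_)
  rw [Real.rpow_neg (by positivity), Real.norm_eq_abs]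
  norm_cast

lemma integrable_norm_pow_mul_norm_of_norm_le {f : ℝ → E} (hf : Integrable f) {C : ℝ} {n k : ℕ}
    (hk : k ≤ n) (hC : ∀ x, ‖f x‖ ≤ C * ((1 + |x|) ^ (n + 2))⁻¹) :
    Integrable fun x : ℝ => ‖x‖ ^ k * ‖f x‖ := by
  refine integrable_of_norm_le_mul_inv_one_add_abs_sq (A := C)
    ((continuous_norm.pow k).aestronglyMeasurable.mul hf.norm.aestronglyMeasurable) fun x => ?_
  have h1 : (1 : ℝ) ≤ 1 + |x| := le_add_of_nonneg_right (abs_nonneg x)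
  have hxk : ‖x‖ ^ k ≤ (1 + |x|) ^ n :=
    calc ‖x‖ ^ k ≤ (1 + |x|) ^ k := by gcongr; exact le_add_of_nonneg_left zero_le_one
      _ ≤ (1 + |x|) ^ n := pow_le_pow_right₀ h1 hk
  rw [Real.norm_of_nonneg (by positivity)]
  calc ‖x‖ ^ k * ‖f x‖ ≤ (1 + |x|) ^ n * (C * ((1 + |x|) ^ (n + 2))⁻¹) :=
        mul_le_mul hxk (hC x) (norm_nonneg _) (by positivity)
    _ = C * ((1 + |x|) ^ 2)⁻¹ := by
        rw [pow_add]; field_simp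

end Integrability

section Fourier

variable {E : Type*} [NormedAddCommGroup E] [NormedSpace ℂ E]

lemma fourier_eq_zero_of_not_integrable {f : ℝ → E} (hf : ¬Integrable f) : 𝓕 f = 0 := by
  ext w
  rw [Real.fourier_eq]
  exact integral_undef (by rwa [Real.fourierIntegral_convergent_iff])

-- `f` need not be measurable; if it is not integrable, `𝓕 f = 0` by the integral's convention.
lemma contDiff_fourier_of_norm_le {f : ℝ → E} {C : ℝ} {n : ℕ}
    (hC : ∀ x, ‖f x‖ ≤ C * ((1 + |x|) ^ (n + 2))⁻¹) : ContDiff ℝ n (𝓕 f) := by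
  by_cases hf : Integrable f
  · exact Real.contDiff_fourier fun k hk =>
      integrable_norm_pow_mul_norm_of_norm_le hf (by exact_mod_cast hk) hC
  · rw [fourier_eq_zero_of_not_integrable hf]
    exact contDiff_const

lemma exists_norm_fourier_le_of_integrable_iteratedDeriv [CompleteSpace E] {g : ℝ → E} {n : ℕ}
    (hg : ContDiff ℝ n g) (hint : ∀ k ≤ n, Integrable (iteratedDeriv k g)) :
    ∃ C, 0 < C ∧ ∀ t, ‖𝓕 g t‖ ≤ C * ((1 + |t|) ^ n)⁻¹ := by
  set A := ∫ x, ‖g x‖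
  set B := ∫ x, ‖iteratedDeriv n g x‖
  have hA : ∀ t, ‖𝓕 g t‖ ≤ A := fun t =>
    VectorFourier.norm_fourierIntegral_le_integral_norm _ _ _ _ _
  have hB : ∀ t, |t| ^ n * ‖𝓕 g t‖ ≤ B := by
    intro t
    have h2π : |t| ^ n ≤ ‖(2 * π * Complex.I * t : ℂ) ^ n‖ := by
      rw [norm_pow, norm_mul, norm_mul, norm_mul, Complex.norm_real, Complex.norm_I, mul_one,
        Complex.norm_ofNat, Complex.norm_real, Real.norm_eq_abs, Real.norm_eq_abs,
        abs_of_pos pi_pos]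
      gcongr
      exact le_mul_of_one_le_left (abs_nonneg t) (by linarith [pi_gt_three])
    calc |t| ^ n * ‖𝓕 g t‖ ≤ ‖(2 * π * Complex.I * t : ℂ) ^ n • 𝓕 g t‖ := by
          rw [norm_smul]; gcongr
      _ = ‖𝓕 (iteratedDeriv n g) t‖ := by
          rw [Real.fourier_iteratedDeriv hg (fun k hk => hint k (by exact_mod_cast hk)) le_rfl]
      _ ≤ B := VectorFourier.norm_fourierIntegral_le_integral_norm _ _ _ _ _
  refine ⟨2 ^ (n - 1) * (A + B) + 1, by positivity, fun t => ?_⟩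
  rw [← div_eq_mul_inv, le_div_iff₀ (by positivity)]
  calc ‖𝓕 g t‖ * (1 + |t|) ^ n ≤ ‖𝓕 g t‖ * (2 ^ (n - 1) * (1 ^ n + |t| ^ n)) := by
        gcongr; exact add_pow_le zero_le_one (abs_nonneg t) n
    _ = 2 ^ (n - 1) * (‖𝓕 g t‖ + |t| ^ n * ‖𝓕 g t‖) := by ring
    _ ≤ 2 ^ (n - 1) * (A + B) + 1 := by grw [hB t, hA t]; linarith

end Fourier

section Leibniz

variable {𝕜 𝔸 : Type*} [NontriviallyNormedField 𝕜]

lemma mul_iteratedDeriv_eq_sub_sum [NormedRing 𝔸] [NormedAlgebra 𝕜 𝔸] {u g : 𝕜 → 𝔸} {k : ℕ}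
    {x : 𝕜} (hu : ContDiffAt 𝕜 k u x) (hg : ContDiffAt 𝕜 k g x) :
    u x * iteratedDeriv k g x = iteratedDeriv k (u * g) x - ∑ i ∈ Finset.range k,
      k.choose (i + 1) * iteratedDeriv (i + 1) u x * iteratedDeriv (k - (i + 1)) g x := by
  rw [iteratedDeriv_mul hu hg, Finset.sum_range_succ']
  simp

lemma exists_norm_iteratedDeriv_le_of_mul_eq [NormedDivisionRing 𝔸] [NormedAlgebra 𝕜 𝔸]
    {u g f : 𝕜 → 𝔸} {w : 𝕜 → ℝ} {n : ℕ} {c A B : ℝ}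
    (hu : ContDiff 𝕜 n u) (hg : ContDiff 𝕜 n g) (hfg : u * g = f) (hc : 0 < c)
    (hlow : ∀ x, c ≤ ‖u x‖) (hu' : ∀ k, 0 < k → k ≤ n → ∀ x, ‖iteratedDeriv k u x‖ ≤ B)
    (hf : ∀ k ≤ n, ∀ x, ‖iteratedDeriv k f x‖ ≤ A * w x) (hw : ∀ x, 0 ≤ w x) :
    ∃ C, ∀ k ≤ n, ∀ x, ‖iteratedDeriv k g x‖ ≤ C * w x := by
  suffices ∀ m ≤ n + 1, ∃ C, 0 ≤ C ∧ ∀ k < m, ∀ x, ‖iteratedDeriv k g x‖ ≤ C * w x by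
    obtain ⟨C, -, hC⟩ := this (n + 1) le_rfl
    exact ⟨C, fun k hk => hC k (Nat.lt_succ_of_le hk)⟩
  intro m hm
  induction m with
  | zero => exact ⟨0, le_rfl, fun k hk => absurd hk k.not_lt_zero⟩
  | succ m ih =>
    obtain ⟨C, hC0, hC⟩ := ih (by omega)
    set C' := c⁻¹ * (A + ∑ i ∈ Finset.range m, (m.choose (i + 1) : ℝ) * B * C)
    refine ⟨max C C', le_max_of_le_left hC0, fun k hk x => ?_⟩
    rcases Nat.lt_succ_iff_lt_or_eq.mp hk with hk | rfl
    · exact (hC k hk x).trans (by gcongr; exacts [hw x, le_max_left _ _])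
    have hmn : k ≤ n := by omega
    have hsum : ‖∑ i ∈ Finset.range k,
        k.choose (i + 1) * iteratedDeriv (i + 1) u x * iteratedDeriv (k - (i + 1)) g x‖ ≤
        (∑ i ∈ Finset.range k, (k.choose (i + 1) : ℝ) * B * C) * w x := by
      rw [Finset.sum_mul]
      refine (norm_sum_le _ _).trans (Finset.sum_le_sum fun i hi => ?_)
      have hi : i < k := Finset.mem_range.mp hi
      rw [norm_mul, norm_mul, mul_assoc _ C]
      have hB : 0 ≤ B := (norm_nonneg _).trans (hu' (i + 1) i.succ_pos (by omega) x)
      gcongr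
      · simpa using Nat.norm_cast_le (α := 𝔸) (k.choose (i + 1))
      · exact hu' (i + 1) i.succ_pos (by omega) x
      · exact hC _ (by omega) x
    have hcg : c * ‖iteratedDeriv k g x‖ ≤
        (A + ∑ i ∈ Finset.range k, (k.choose (i + 1) : ℝ) * B * C) * w x :=
      calc c * ‖iteratedDeriv k g x‖ ≤ ‖u x * iteratedDeriv k g x‖ := by
            rw [norm_mul]; gcongr; exact hlow x
        _ ≤ ‖iteratedDeriv k f x‖ + ‖∑ i ∈ Finset.range k,
            k.choose (i + 1) * iteratedDeriv (i + 1) u x * iteratedDeriv (k - (i + 1)) g x‖ := by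
            rw [mul_iteratedDeriv_eq_sub_sum (hu.contDiffAt.of_le (by exact_mod_cast hmn))
              (hg.contDiffAt.of_le (by exact_mod_cast hmn)), hfg]
            exact norm_sub_le _ _
        _ ≤ _ := by rw [add_mul]; exact add_le_add (hf k hmn x) hsum
    calc ‖iteratedDeriv k g x‖ ≤ C' * w x := by
          rw [mul_assoc, ← div_eq_inv_mul, le_div_iff₀' hc]; exact hcg
      _ ≤ max C C' * w x := by gcongr; exacts [hw x, le_max_right _ _]

end Leibniz

/-- Decay of the resolvent kernel `K = 𝓕⁻¹[(1 + M̂)⁻¹ − 1]` (Lemma 5.1 kernel bound). -/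
theorem kernel_decay (M : ℝ → ℂ) (C₀ c C₁ : ℝ) (hc : 0 < c)
    (hdecay : ∀ t : ℝ, 0 ≤ t → ‖M t‖ ≤ C₀ * ((1 + t) ^ 6)⁻¹)
    (hzero : ∀ t : ℝ, t < 0 → M t = 0)
    (hlow : ∀ ω : ℝ, c ≤ ‖1 + 𝓕 M ω‖)
    (hder : ∀ l : ℕ, l ≤ 4 → ∀ ω : ℝ,
      ‖iteratedDeriv l (fun w => 𝓕 M w) ω‖ ≤ C₁ * ((1 + |ω|) ^ 2)⁻¹) :
    ∃ C : ℝ, 0 < C ∧ ∀ t : ℝ,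
      ‖(𝓕⁻ fun ω => (1 + 𝓕 M ω)⁻¹ - 1) t‖ ≤ C * ((1 + |t|) ^ 4)⁻¹ := by
  have hM : ∀ t, ‖M t‖ ≤ C₀ * ((1 + |t|) ^ (4 + 2))⁻¹ := by
    intro t
    rcases lt_or_ge t 0 with ht | ht
    · have hC₀ : 0 ≤ C₀ := by simpa using (norm_nonneg _).trans (hdecay 0 le_rfl)
      rw [hzero t ht, norm_zero]
      positivity
    · rw [abs_of_nonneg ht]; exact hdecay t ht
  have hF : ContDiff ℝ 4 (𝓕 M) := contDiff_fourier_of_norm_le hM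
  have hne : ∀ ω, 1 + 𝓕 M ω ≠ 0 := fun ω h => by
    have := hlow ω; rw [h, norm_zero] at this; linarith
  have hu : ContDiff ℝ 4 fun ω => 1 + 𝓕 M ω := contDiff_const.add hF
  have hg : ContDiff ℝ 4 fun ω => (1 + 𝓕 M ω)⁻¹ - 1 := (hu.inv hne).sub contDiff_const
  have hC₁ : 0 ≤ C₁ := by simpa using (norm_nonneg _).trans (hder 0 (by norm_num) 0)
  obtain ⟨C, hC⟩ := exists_norm_iteratedDeriv_le_of_mul_eq (B := C₁) (f := fun ω => -𝓕 M ω)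
    hu hg (funext fun ω => by simp [mul_sub, hne ω]) hc hlow
    (fun k hk hk4 ω => by
      rw [iteratedDeriv_const_add hk]
      exact (hder k hk4 ω).trans (mul_le_of_le_one_right hC₁
        (inv_le_one_of_one_le₀ (one_le_pow₀ (le_add_of_nonneg_right (abs_nonneg ω))))))
    (fun k hk ω => by simpa using hder k hk ω) (fun ω => by positivity)
  obtain ⟨K, hK, hKt⟩ := exists_norm_fourier_le_of_integrable_iteratedDeriv hg fun k hk =>
    integrable_of_norm_le_mul_inv_one_add_abs_sq
      (hg.continuous_iteratedDeriv k (by exact_mod_cast hk)).aestronglyMeasurable (hC k hk)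
  exact ⟨K, hK, fun t => by simpa [Real.fourierInv_eq_fourier_neg] using hKt (-t)⟩
end
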